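/- arXiv:1705.05714 — 5 statements merged into one kernel-verified Lean document; each statement's English description precedes it below -/
import Mathlib

section
/- Let S be an Artinian Gorenstein local ring and let A be an ideal of S. Then the annihilator of the annihilator of A equals A, i.e., (0 :_S (0 :_S A)) = A. -/
/-!
If `R` is injective over itself, an element `y` killing `(A : x)` is the image of `1` under a
map `R ⧸ (A : x) → R`, which extends along the embedding `R ⧸ (A : x) ↪ R ⧸ A` given by `x`;
hence `ann (A : x) = x • ann A`. So if `x` kills `ann A`, the ideal `(A : x)` has zero
annihilator. In an Artinian ring non-zero-divisors are units, so a proper ideal consists of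
zero divisors and is therefore killed by a nonzero element; thus `(A : x) = ⊤`, i.e. `x ∈ A`.
-/

theorem Module.Injective.exists_apply_eq_of_mem_annihilator_ker {R M : Type*} [CommRing R]
    [AddCommGroup M] [Module R M] [Module.Injective R R] (φ : R →ₗ[R] M) {y : R}
    (hy : y ∈ (LinearMap.ker φ).annihilator) : ∃ h : M →ₗ[R] R, h (φ 1) = y := by
  have hker : LinearMap.ker φ ≤ LinearMap.ker (LinearMap.toSpanSingleton R R y) := fun s hs => by
    rw [LinearMap.mem_ker, LinearMap.toSpanSingleton_apply, smul_eq_mul, mul_comm]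
    exact Submodule.mem_annihilator.mp hy s hs
  obtain ⟨h, hh⟩ := Module.Injective.extension_property R R _ _ ((LinearMap.ker φ).liftQ φ le_rfl)
    (LinearMap.ker_eq_bot.mp ((LinearMap.ker φ).ker_liftQ_eq_bot' φ rfl))
    ((LinearMap.ker φ).liftQ _ hker)
  refine ⟨h, ?_⟩
  simpa only [LinearMap.comp_apply, Submodule.liftQ_apply, LinearMap.toSpanSingleton_apply,
    one_smul] using LinearMap.congr_fun hh (Submodule.Quotient.mk 1)

namespace Ideal

open Submodule

variable {R : Type*} [CommRing R]

theorem le_annihilator_annihilator (I : Ideal R) : I ≤ I.annihilator.annihilator := by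
  rw [le_annihilator_iff, smul_eq_mul, mul_annihilator]

theorem annihilator_ne_bot_of_ne_top [IsArtinianRing R] {I : Ideal R} (hI : I ≠ ⊤) :
    I.annihilator ≠ ⊥ := by
  refine (bot_lt_annihilator_of_disjoint_nonZeroDivisors ?_).ne'
  refine Set.disjoint_left.mpr fun a ha hreg => hI ?_
  exact eq_top_of_isUnit_mem I ha (IsArtinianRing.isUnit_of_mem_nonZeroDivisors hreg)

theorem annihilator_colon_singleton [Module.Injective R R] (A : Ideal R) (x : R) :
    (A.colon {x}).annihilator = span {x} * A.annihilator := by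
  refine le_antisymm (fun y hy => ?_) ?_
  · have hker : LinearMap.ker (LinearMap.toSpanSingleton R (R ⧸ A) (Submodule.Quotient.mk x)) =
        A.colon {x} := by
      ext r
      rw [LinearMap.mem_ker, LinearMap.toSpanSingleton_apply, ← Submodule.Quotient.mk_smul,
        Submodule.Quotient.mk_eq_zero, mem_colon_singleton]
    obtain ⟨h, rfl⟩ := Module.Injective.exists_apply_eq_of_mem_annihilator_ker _ (hker ▸ hy)
    refine mem_span_singleton_mul.mpr
      ⟨h (Submodule.Quotient.mk 1), mem_annihilator.mpr fun a ha => ?_, ?_⟩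
    · rw [smul_eq_mul, mul_comm, ← smul_eq_mul, ← map_smul, ← Submodule.Quotient.mk_smul,
        smul_eq_mul, mul_one, (Submodule.Quotient.mk_eq_zero A).mpr ha, map_zero]
    · rw [← smul_eq_mul, ← map_smul, ← Submodule.Quotient.mk_smul, smul_eq_mul, mul_one,
        LinearMap.toSpanSingleton_apply, one_smul]
  · refine mul_le.mpr fun r hr z hz => mem_annihilator.mpr fun s hs => ?_
    obtain ⟨c, rfl⟩ := mem_span_singleton'.mp hr
    have hsx : s * x ∈ A := mem_colon_singleton.mp hs
    calc (c * x * z) • s = c • z • (s * x) := by simp only [smul_eq_mul]; ring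
      _ = 0 := by rw [mem_annihilator.mp hz _ hsx, smul_zero]

end Ideal

theorem ann_ann_eq_general (S : Type*) [CommRing S] [IsArtinianRing S]
    [Module.Injective S S] (A : Ideal S) :
    Submodule.colon (⊥ : Ideal S) (Submodule.colon (⊥ : Ideal S) A : Ideal S) = A := by
  simp only [Submodule.bot_colon]
  refine le_antisymm (fun x hx => ?_) A.le_annihilator_annihilator
  have hcolon : (A.colon {x}).annihilator = ⊥ := by
    rw [Ideal.annihilator_colon_singleton, eq_bot_iff, ← Submodule.annihilator_mul A.annihilator]
    exact Ideal.mul_mono_left ((Ideal.span_singleton_le_iff_mem _).mpr hx)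
  have htop : A.colon {x} = ⊤ := by_contra (Ideal.annihilator_ne_bot_of_ne_top · hcolon)
  simpa using htop

/-- Gorenstein duality for an Artinian Gorenstein local ring `S`
(Gorenstein meaning `S` is injective as a module over itself):
the annihilator of the annihilator of an ideal `A` is `A` itself. -/
theorem ann_ann_eq (S : Type*) [CommRing S] [IsArtinianRing S] [IsLocalRing S]
    [Module.Injective S S] (A : Ideal S) :
    Submodule.colon (⊥ : Ideal S) (Submodule.colon (⊥ : Ideal S) A : Ideal S) = A :=
  ann_ann_eq_general S A
end

section
/- Let (S, n, k) be a Noetherian local ring, J an ideal of S, and d : F → G a homomorphism of finitely generated free S-modules. Suppose that the ideal I₁(d) generated by the entries of (any matrix representing) d is contained in n, and that (J :_S n) · I₁(d) is not contained in n·J. Then the residue field k = S/n is a direct summand of the kernel of the induced map d ⊗_S (S/J) : F/JF → G/JG as an S/J-module. -/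
set_option maxHeartbeats 1000000


/-- `I₁(d)`: the ideal generated by the entries of (any matrix representing) a map
`d : F → G` of finite free modules; basis-freely, the image of `G* ⊗ F → S`. -/
noncomputable def entriesIdeal {S F G : Type*} [CommRing S] [AddCommGroup F] [Module S F]
    [AddCommGroup G] [Module S G] (d : F →ₗ[S] G) : Ideal S :=
  Ideal.span {x | ∃ (g : Module.Dual S G) (f : F), g (d f) = x}

/-- Lemma 4.1: if `I₁(d) ⊆ n` and `(J : n)·I₁(d) ⊄ nJ`, then the residue field is a
direct summand of the kernel of `d ⊗ S/J : F/JF → G/JG`. -/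
theorem residue_field_summand_of_colon_not_le
    (S : Type*) [CommRing S] [IsNoetherianRing S] [IsLocalRing S] (J : Ideal S)
    (F G : Type*) [AddCommGroup F] [Module S F] [AddCommGroup G] [Module S G]
    [Module.Free S F] [Module.Finite S F] [Module.Free S G] [Module.Finite S G]
    (d : F →ₗ[S] G)
    (h1 : entriesIdeal d ≤ IsLocalRing.maximalIdeal S)
    (h2 : ¬ (Submodule.colon (J : Submodule S S) (IsLocalRing.maximalIdeal S) *
        entriesIdeal d ≤ IsLocalRing.maximalIdeal S * J)) :
    ∃ (W W' : Submodule S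
        (LinearMap.ker (Submodule.mapQ (J • ⊤ : Submodule S F) (J • ⊤ : Submodule S G) d
          (Submodule.smul_le.mpr fun r hr x _ => by
            simpa using Submodule.smul_mem_smul hr (Submodule.mem_top (x := d x)))))),
      IsCompl W W' ∧ Nonempty (W ≃ₗ[S] S ⧸ IsLocalRing.maximalIdeal S) := by
  classical
  set n := IsLocalRing.maximalIdeal S with hn
  set nJ : Ideal S := n * J with hnJ
  set dbar := Submodule.mapQ (J • ⊤ : Submodule S F) (J • ⊤ : Submodule S G) d
          (Submodule.smul_le.mpr fun r hr x _ => by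
            simpa using Submodule.smul_mem_smul hr (Submodule.mem_top (x := d x))) with hdbar
  -- Step A: extract a, g, f with a * g (d f) ∉ nJ
  obtain ⟨a, ha, g, f, hx⟩ : ∃ a ∈ Submodule.colon (J : Submodule S S) n,
      ∃ (g : Module.Dual S G) (f : F), a * g (d f) ∉ nJ := by
    by_contra hc
    push_neg at hc
    apply h2
    rw [Ideal.mul_le]
    intro r hr s hs
    induction hs using Submodule.span_induction with
    | mem x hxm =>
      obtain ⟨g, f, rfl⟩ := hxm
      exact hc r hr g f
    | zero => simp
    | add x y _ _ hx hy => simpa [mul_add] using Ideal.add_mem nJ hx hy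
    | smul c x _ hx => simpa [smul_eq_mul, mul_left_comm] using Ideal.mul_mem_left nJ c hx
  have haJ : ∀ z ∈ n, a * z ∈ J := by
    intro z hz
    simpa [smul_eq_mul, mul_comm] using Submodule.mem_colon.mp ha z hz
  have hentry : ∀ (g' : Module.Dual S G) (f' : F), g' (d f') ∈ n := fun g' f' =>
    h1 (Ideal.subset_span ⟨g', f', rfl⟩)
  -- g maps J•⊤ into J
  have hgJ : ∀ w ∈ (J • ⊤ : Submodule S G), g w ∈ J := by
    intro w hw
    have : (J • ⊤ : Submodule S G) ≤ Submodule.comap g (J : Submodule S S) := by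
      apply Submodule.smul_le.mpr
      intro j hj x _
      simpa [map_smul, smul_eq_mul] using Ideal.mul_mem_right (g x) J hj
    exact this hw
  -- x₀ : the kernel element
  have hdaf : d (a • f) ∈ (J • ⊤ : Submodule S G) := by
    set bG := Module.Free.chooseBasis S G
    rw [map_smul, ← bG.sum_repr (d f), Finset.smul_sum]
    apply Submodule.sum_mem
    intro i _
    rw [smul_smul]
    exact Submodule.smul_mem_smul
      (haJ _ (by simpa [Module.Basis.coord_apply] using hentry (bG.coord i) f)) trivial
  have hx0mem : (Submodule.Quotient.mk (a • f) : F ⧸ (J • ⊤ : Submodule S F)) ∈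
      LinearMap.ker dbar := by
    rw [LinearMap.mem_ker, hdbar, Submodule.mapQ_apply, Submodule.Quotient.mk_eq_zero]
    exact hdaf
  set K := LinearMap.ker dbar with hK
  set x₀ : K := ⟨Submodule.Quotient.mk (a • f), hx0mem⟩ with hx₀
  -- Λ : F⧸JF → S⧸nJ induced by g ∘ d
  have hLbound : (J • ⊤ : Submodule S F) ≤
      Submodule.comap (g ∘ₗ d) (nJ : Submodule S S) := by
    apply Submodule.smul_le.mpr
    intro j hj x _
    simp only [Submodule.mem_comap, LinearMap.comp_apply, map_smul, smul_eq_mul]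
    rw [mul_comm]
    exact Ideal.mul_mem_mul (hentry g x) hj
  set Λ := Submodule.mapQ (J • ⊤ : Submodule S F) (nJ : Submodule S S) (g ∘ₗ d) hLbound with hΛ
  set ψ₀ : K →ₗ[S] (S ⧸ nJ) := Λ ∘ₗ K.subtype with hψ₀
  -- ψ₀ lands in the n-torsion
  have hlift : ∀ x : K, ∃ f' : F, Submodule.Quotient.mk f' = (x : F ⧸ (J • ⊤ : Submodule S F))
      ∧ d f' ∈ (J • ⊤ : Submodule S G) := by
    intro x
    obtain ⟨f', hf'⟩ := Submodule.Quotient.mk_surjective _ (x : F ⧸ (J • ⊤ : Submodule S F))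
    refine ⟨f', hf', ?_⟩
    have hker := x.2
    rw [LinearMap.mem_ker, ← hf', hdbar, Submodule.mapQ_apply,
      Submodule.Quotient.mk_eq_zero] at hker
    exact hker
  have htor : ∀ x : K, ψ₀ x ∈ Submodule.torsionBySet S (S ⧸ nJ) (n : Set S) := by
    intro x
    obtain ⟨f', hf', hdf'⟩ := hlift x
    rw [Submodule.mem_torsionBySet_iff]
    rintro ⟨z, hz⟩
    have : ψ₀ x = Submodule.Quotient.mk (g (d f')) := by
      rw [hψ₀, LinearMap.comp_apply, Submodule.subtype_apply, ← hf', hΛ,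
        Submodule.mapQ_apply, LinearMap.comp_apply]
    rw [this, ← Submodule.Quotient.mk_smul, Submodule.Quotient.mk_eq_zero]
    exact Ideal.mul_mem_mul hz (hgJ _ hdf')
  letI : n.IsMaximal := by rw [hn]; infer_instance
  letI : Field (S ⧸ n) := Ideal.Quotient.field n
  set Tn := Submodule.torsionBySet S (S ⧸ nJ) (n : Set S) with hTn
  set ψ₁ : K →ₗ[S] Tn := ψ₀.codRestrict Tn htor with hψ₁
  -- v₀ is the nonzero vector ψ₁ x₀
  have hv₀ : (ψ₁ x₀ : S ⧸ nJ) ≠ 0 := by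
    have : ψ₀ x₀ = Submodule.Quotient.mk (g (d (a • f))) := by
      rw [hψ₀, LinearMap.comp_apply, hΛ]
      rfl
    simp only [hψ₁, LinearMap.codRestrict_apply]
    rw [this, Ne, Submodule.Quotient.mk_eq_zero]
    simpa [map_smul, smul_eq_mul] using hx
  have hv₀' : ψ₁ x₀ ≠ 0 := fun h => hv₀ (by rw [h]; rfl)
  letI : Module (S ⧸ n) Tn :=
    inferInstanceAs (Module (S ⧸ n) (Submodule.torsionBySet S (S ⧸ nJ) (n : Set S)))
  letI : IsScalarTower S (S ⧸ n) Tn :=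
    inferInstanceAs (IsScalarTower S (S ⧸ n) (Submodule.torsionBySet S (S ⧸ nJ) (n : Set S)))
  -- a (S ⧸ n)-functional
  have hkerspan : LinearMap.ker (LinearMap.toSpanSingleton (S ⧸ n) Tn (ψ₁ x₀)) = ⊥ := by
    rw [LinearMap.ker_eq_bot']
    intro c hcv
    by_contra hc
    apply hv₀'
    have h' := congrArg (fun y => c⁻¹ • y) hcv
    simpa [LinearMap.toSpanSingleton_apply, smul_smul, inv_mul_cancel₀ hc] using h'
  obtain ⟨θ, hθ⟩ := (LinearMap.toSpanSingleton (S ⧸ n) Tn (ψ₁ x₀)).exists_leftInverse_of_injective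
    hkerspan
  -- ψ : K →ₗ[S] (S ⧸ n)
  set ψ : K →ₗ[S] (S ⧸ n) := (θ.restrictScalars S) ∘ₗ ψ₁ with hψ
  -- φ : (S ⧸ n) →ₗ[S] K
  have hφbound : (n : Submodule S S) ≤ LinearMap.ker (LinearMap.toSpanSingleton S K x₀) := by
    intro z hz
    rw [LinearMap.mem_ker, LinearMap.toSpanSingleton_apply]
    apply Subtype.ext
    show z • (Submodule.Quotient.mk (a • f) : F ⧸ (J • ⊤ : Submodule S F)) = 0
    rw [← Submodule.Quotient.mk_smul, Submodule.Quotient.mk_eq_zero, smul_smul]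
    exact Submodule.smul_mem_smul (mul_comm a z ▸ haJ z hz) trivial
  set φ : (S ⧸ n) →ₗ[S] K := Submodule.liftQ (n : Submodule S S)
    (LinearMap.toSpanSingleton S K x₀) hφbound with hφ
  have hφmk : ∀ s : S, φ (Submodule.Quotient.mk s) = s • x₀ := by
    intro s
    rw [hφ, Submodule.liftQ_apply, LinearMap.toSpanSingleton_apply]
  have hcomp : ∀ x : (S ⧸ n), ψ (φ x) = x := by
    intro x
    obtain ⟨s, rfl⟩ := Submodule.Quotient.mk_surjective _ x
    rw [hφmk, map_smul]
    have h1' : ψ x₀ = θ (ψ₁ x₀) := rfl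
    have h2' : θ (ψ₁ x₀) = 1 := by
      have := DFunLike.congr_fun hθ (1 : (S ⧸ n))
      simpa [LinearMap.toSpanSingleton_apply] using this
    rw [h1', h2']
    show s • (Submodule.Quotient.mk (1:S) : (S ⧸ n)) = Submodule.Quotient.mk s
    rw [← Submodule.Quotient.mk_smul, smul_eq_mul, mul_one]
  have hinj : Function.Injective φ := fun x y hxy => by
    rw [← hcomp x, ← hcomp y, hxy]
  refine ⟨LinearMap.range φ, LinearMap.ker ψ, ⟨?_, ?_⟩, ⟨(LinearEquiv.ofInjective φ hinj).symm⟩⟩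
  · rw [Submodule.disjoint_def]
    rintro x ⟨c, rfl⟩ hxk
    rw [LinearMap.mem_ker, hcomp] at hxk
    rw [hxk, map_zero]
  · rw [codisjoint_iff, eq_top_iff]
    intro x _
    have hker : x - φ (ψ x) ∈ LinearMap.ker ψ := by
      rw [LinearMap.mem_ker, map_sub, hcomp, sub_self]
    have hxeq : x = φ (ψ x) + (x - φ (ψ x)) := by abel
    rw [hxeq]
    exact Submodule.add_mem_sup (LinearMap.mem_range_self φ (ψ x)) hker
end

section
/- Let (R, m, k) be an Artinian local ring with canonical module ω_R. Suppose T is a finitely generated R-module with the property that whenever N is a finitely generated R-module with Tor_i^R(T, N) = 0 for all i > 0, then N is free; and suppose T is a direct summand of some syzygy module of ω_R. Then every totally reflexive R-module is free. -/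
open CategoryTheory

/-- A finitely generated module `X` is totally reflexive if there is a doubly infinite
exact complex of finitely generated free modules whose dual complex is also exact,
with `X` a cokernel of one of the differentials. -/
def IsTotallyReflexive (R : Type) [CommRing R] (X : Type) [AddCommGroup X] [Module R X] :
    Prop :=
  ∃ (F : ℤ → ModuleCat.{0} R) (d : ∀ i : ℤ, F i →ₗ[R] F (i + 1)),
    (∀ i, Module.Free R (F i)) ∧ (∀ i, Module.Finite R (F i)) ∧
    (∀ i, LinearMap.range (d i) = LinearMap.ker (d (i + 1))) ∧
    (∀ i, LinearMap.range ((d (i + 1)).dualMap) = LinearMap.ker ((d i).dualMap)) ∧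
    (∃ i, Nonempty (X ≃ₗ[R] ((F (i + 1)) ⧸ LinearMap.range (d i))))

/-- `IsSyzygy R n M N` : `N` is an `n`-th syzygy module of `M`, i.e. a kernel appearing
`n` steps into a resolution of `M` by finitely generated free modules. -/
def IsSyzygy (R : Type) [CommRing R] : ℕ → ModuleCat.{0} R → ModuleCat.{0} R → Prop
  | 0, M, N => Nonempty ((N : Type) ≃ₗ[R] M)
  | n + 1, M, N => ∃ (F : ModuleCat R) (f : F →ₗ[R] M), Module.Free R F ∧ Module.Finite R F ∧
      Function.Surjective f ∧ IsSyzygy R n (ModuleCat.of R (LinearMap.ker f)) N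

/-!
A totally reflexive module `X` is a cokernel in a complete resolution `F`; the truncation of `F`
is a free resolution of `X`, so `Tor_i(T, X)` for `i > 0` is homology of `T ⊗ F`, and it suffices
that `T ⊗ F` be exact. For an injective module `E`, `E ⊗ F ≅ Hom(F^*, E)` is exact because `F^*`
is. Since each `F i` is flat, exactness of `- ⊗ F` passes from `E` to its syzygies, and from
those to direct summands such as `T`. The test property of `T` then makes `X` free.
-/

open Limits LinearMap MonoidalCategory TensorProduct

universe v u

variable {C : Type u} [Category.{v} C] [Abelian C]

lemma HomologicalComplex.exactAt_restriction_embeddingUpIntLE_iff (K : CochainComplex C ℤ)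
    (p : ℤ) (n : ℕ) :
    (K.restriction (ComplexShape.embeddingUpIntLE p)).ExactAt (n + 1) ↔
      K.ExactAt (p - (n + 1)) := by
  rw [HomologicalComplex.exactAt_iff' _ (n + 2) (n + 1) n (by simp) (by simp),
    HomologicalComplex.exactAt_iff' K (p - (n + 2)) (p - (n + 1)) (p - n) (by simp; lia)
      (by simp; lia)]
  exact ShortComplex.exact_iff_of_iso (HomologicalComplex.restriction.sc'Iso K _ _ _ _
    (by simp) (by simp) (by simp) (by simp; lia) (by simp; lia))

namespace CategoryTheory.ProjectiveResolution

noncomputable def ofExact (P : ChainComplex C ℕ) [∀ n, Projective (P.X n)]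
    (hP : ∀ n, P.ExactAt (n + 1)) {Y : C} (π : P.X 0 ⟶ Y) (hπ : P.d 1 0 ≫ π = 0)
    (hexact : (ShortComplex.mk _ _ hπ).Exact) [Epi π] : ProjectiveResolution Y where
  complex := P
  π := (ChainComplex.toSingle₀Equiv _ _).symm ⟨π, hπ⟩
  quasiIso := ⟨fun n => by
    cases n
    · rw [ChainComplex.quasiIsoAt₀_iff, ShortComplex.quasiIso_iff_of_zeros']
      · refine (ShortComplex.exact_and_epi_g_iff_of_iso ?_).2 ⟨hexact, ‹Epi π›⟩
        exact ShortComplex.isoMk (Iso.refl _) (Iso.refl _) (Iso.refl _)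
          (by erw [Category.id_comp, Category.comp_id]; rfl)
          (by erw [Category.id_comp, Category.comp_id]
              exact (ChainComplex.toSingle₀Equiv_symm_apply_f_zero _ _).symm)
      · exact P.shape _ _ (by simp)
      all_goals rfl
    · rw [quasiIsoAt_iff_exactAt']
      · apply hP
      · apply ChainComplex.exactAt_succ_single_obj⟩

/-- The resolution by the stupid truncation `⋯ → K.X i → K.X j`. -/
noncomputable def ofCochainComplex (K : CochainComplex C ℤ) [∀ i, Projective (K.X i)]
    (hK : ∀ i, K.ExactAt i) (i j : ℤ) (hij : i + 1 = j) :
    ProjectiveResolution (cokernel (K.d i j)) :=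
  let e := ComplexShape.embeddingUpIntLE j
  have h₀ : e.f 0 = j := by simp [e]
  have h₁ : e.f 1 = i := by simp [e]; lia
  have hd : (K.restriction e).d 1 0 =
      (K.restrictionXIso e h₁).hom ≫ K.d i j ≫ (K.restrictionXIso e h₀).inv :=
    K.restriction_d_eq e h₁ h₀
  have hπ : (K.restriction e).d 1 0 ≫ (K.restrictionXIso e h₀).hom ≫ cokernel.π _ = 0 := by
    rw [hd]; simp
  have : ∀ n, Projective ((K.restriction e).X n) := fun n => inferInstanceAs (Projective (K.X _))
  ofExact (K.restriction e)
    (fun n => (HomologicalComplex.exactAt_restriction_embeddingUpIntLE_iff K j n).mpr (hK _))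
    ((K.restrictionXIso e h₀).hom ≫ cokernel.π _) hπ
    ((ShortComplex.exact_iff_of_iso (S₁ := ShortComplex.mk _ _ hπ)
      (S₂ := ShortComplex.mk _ _ (cokernel.condition (K.d i j)))
      (ShortComplex.isoMk (K.restrictionXIso e h₁) (K.restrictionXIso e h₀) (Iso.refl _)
        (by dsimp only; rw [hd]; simp) (by simp))).mpr
      (ShortComplex.exact_of_g_is_cokernel _ (cokernelIsCokernel _)))

end CategoryTheory.ProjectiveResolution

variable {R : Type} [CommRing R]

lemma CochainComplex.exactAt_succ_iff_function_exact (K : CochainComplex (ModuleCat.{0} R) ℤ)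
    (j : ℤ) :
    K.ExactAt (j + 1) ↔ Function.Exact (K.d j (j + 1)).hom (K.d (j + 1) (j + 1 + 1)).hom := by
  rw [HomologicalComplex.exactAt_iff' K j (j + 1) (j + 1 + 1) (by simp) (by simp),
    ShortComplex.ShortExact.moduleCat_exact_iff_function_exact]
  rfl

lemma Module.Injective.exact_lcomp {M₁ M₂ M₃ : Type*} (E : Type*)
    [AddCommGroup M₁] [AddCommGroup M₂] [AddCommGroup M₃] [AddCommGroup E]
    [Module R M₁] [Module R M₂] [Module R M₃] [Module R E] [Module.Injective R E]
    {f : M₁ →ₗ[R] M₂} {g : M₂ →ₗ[R] M₃} (hfg : Function.Exact f g) :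
    Function.Exact (lcomp R E g) (lcomp R E f) := by
  intro φ
  refine ⟨fun hφ => ?_, fun ⟨ψ, hψ⟩ => hψ ▸ ?_⟩
  · have hfg' : Function.Exact f g.rangeRestrict := fun y => by
      simpa [Subtype.ext_iff] using hfg y
    obtain ⟨ψ, rfl⟩ :=
      (exact_lcomp_of_exact_of_surjective E hfg' g.surjective_rangeRestrict φ).mp hφ
    obtain ⟨χ, hχ⟩ := Module.Injective.extension_property R E _ _ (LinearMap.range g).subtype
      (Submodule.injective_subtype _) ψ
    exact ⟨χ, by rw [← hχ]; rfl⟩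
  · ext x
    simp [hfg.apply_apply_eq_zero]

lemma LinearMap.lTensor_rTensor_comm {M N P Q : Type*} [AddCommGroup M] [AddCommGroup N]
    [AddCommGroup P] [AddCommGroup Q] [Module R M] [Module R N] [Module R P] [Module R Q]
    (s : M →ₗ[R] N) (g : P →ₗ[R] Q) (x : M ⊗[R] P) :
    lTensor N g (rTensor P s x) = rTensor Q s (lTensor M g x) := by
  rw [← LinearMap.comp_apply, lTensor_comp_rTensor, ← rTensor_comp_lTensor, LinearMap.comp_apply]

section TensorEquivHomDual

variable (E F : Type*) [AddCommGroup E] [Module R E] [AddCommGroup F] [Module R F]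
  [Module.Free R F] [Module.Finite R F]

noncomputable def tensorEquivHomDual : E ⊗[R] F ≃ₗ[R] (Module.Dual R F →ₗ[R] E) :=
  TensorProduct.comm R E F ≪≫ₗ TensorProduct.congr (Module.evalEquiv R F) (LinearEquiv.refl R E) ≪≫ₗ
    dualTensorHomEquiv R (Module.Dual R F) E

variable {E F}

@[simp]
lemma tensorEquivHomDual_tmul (e : E) (x : F) (f : Module.Dual R F) :
    tensorEquivHomDual E F (e ⊗ₜ x) f = f x • e := by
  simp [tensorEquivHomDual, dualTensorHomEquiv, dualTensorHom_apply]

lemma tensorEquivHomDual_comp_lTensor {G : Type*} [AddCommGroup G] [Module R G] [Module.Free R G]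
    [Module.Finite R G] (g : F →ₗ[R] G) :
    (tensorEquivHomDual E G).toLinearMap ∘ₗ lTensor E g =
      lcomp R E g.dualMap ∘ₗ (tensorEquivHomDual E F).toLinearMap := by
  ext e x f
  simp

end TensorEquivHomDual

section IsTensorExact

variable {F : ℤ → ModuleCat.{0} R} (d : ∀ i : ℤ, F i →ₗ[R] F (i + 1))

def IsTensorExact (M : Type*) [AddCommGroup M] [Module R M] : Prop :=
  ∀ i, Function.Exact (lTensor M (d i)) (lTensor M (d (i + 1)))

variable {d}

lemma IsTensorExact.of_flat (hd : ∀ i, Function.Exact (d i) (d (i + 1))) (M : Type*)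
    [AddCommGroup M] [Module R M] [Module.Flat R M] : IsTensorExact d M :=
  fun i => Module.Flat.lTensor_exact M (hd i)

lemma IsTensorExact.of_injective [∀ i, Module.Free R (F i)] [∀ i, Module.Finite R (F i)]
    (hd : ∀ i, Function.Exact (d (i + 1)).dualMap (d i).dualMap) (E : Type*) [AddCommGroup E]
    [Module R E] [Module.Injective R E] : IsTensorExact d E := fun i =>
  (Function.Exact.iff_of_ladder_linearEquiv (tensorEquivHomDual_comp_lTensor (d i)).symm
    (tensorEquivHomDual_comp_lTensor (d (i + 1))).symm).mp
    (Module.Injective.exact_lcomp E (hd i))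

lemma IsTensorExact.of_retract {M N : Type*} [AddCommGroup M] [Module R M] [AddCommGroup N]
    [Module R N] (s : M →ₗ[R] N) (r : N →ₗ[R] M) (hrs : r ∘ₗ s = LinearMap.id)
    (hN : IsTensorExact d N) : IsTensorExact d M := by
  have hr (i : ℤ) (x : M ⊗[R] F i) : rTensor (F i) r (rTensor (F i) s x) = x := by
    rw [← LinearMap.comp_apply, ← rTensor_comp, hrs, rTensor_id, LinearMap.id_apply]
  intro i x
  refine ⟨fun hx => ?_, fun ⟨y, hy⟩ => ?_⟩
  · obtain ⟨y, hy⟩ := (hN i (rTensor _ s x)).mp (by rw [lTensor_rTensor_comm, hx, map_zero])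
    exact ⟨rTensor _ r y, by rw [lTensor_rTensor_comm, hy, hr]⟩
  · rw [← hy, ← hr i y, lTensor_rTensor_comm, lTensor_rTensor_comm, (hN i).apply_apply_eq_zero,
      map_zero]

/-- The long exact homology sequence of `0 → K ⊗ F → G ⊗ F → M ⊗ F → 0`, chased by hand. -/
lemma IsTensorExact.of_shortExact [∀ i, Module.Flat R (F i)] {K G M : Type*} [AddCommGroup K]
    [Module R K] [AddCommGroup G] [Module R G] [AddCommGroup M] [Module R M]
    {k : K →ₗ[R] G} {p : G →ₗ[R] M} (hk : Function.Injective k) (hp : Function.Surjective p)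
    (hkp : Function.Exact k p) (hG : IsTensorExact d G) (hM : IsTensorExact d M) :
    IsTensorExact d K := by
  have hkT (i : ℤ) : Function.Injective (rTensor (F i) k) :=
    Module.Flat.rTensor_preserves_injective_linearMap k hk
  intro i
  obtain ⟨j, rfl⟩ : ∃ j, i = j + 1 := ⟨i - 1, by ring⟩
  intro x
  refine ⟨fun hx => ?_, fun ⟨y, hy⟩ => ?_⟩
  · obtain ⟨b, hb⟩ := (hG (j + 1) (rTensor _ k x)).mp (by rw [lTensor_rTensor_comm, hx, map_zero])
    obtain ⟨c, hc⟩ := (hM j (rTensor _ p b)).mp <| by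
      rw [lTensor_rTensor_comm, hb, (rTensor_exact _ hkp hp).apply_apply_eq_zero]
    obtain ⟨b', rfl⟩ := rTensor_surjective _ hp c
    obtain ⟨a, ha⟩ := (rTensor_exact _ hkp hp (b - lTensor G (d j) b')).mp <| by
      rw [map_sub, ← lTensor_rTensor_comm, hc, sub_self]
    refine ⟨a, hkT _ ?_⟩
    rw [← lTensor_rTensor_comm, ha, map_sub, hb, (hG j).apply_apply_eq_zero, sub_zero]
  · apply hkT
    rw [← hy, ← lTensor_rTensor_comm, ← lTensor_rTensor_comm, (hG _).apply_apply_eq_zero,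
      map_zero]

lemma IsTensorExact.of_isSyzygy [∀ i, Module.Flat R (F i)]
    (hd : ∀ i, Function.Exact (d i) (d (i + 1))) :
    ∀ (n : ℕ) {M N : ModuleCat.{0} R}, IsTensorExact d M → IsSyzygy R n M N → IsTensorExact d N
  | 0, _, _, hM, ⟨e⟩ => hM.of_retract e.toLinearMap e.symm.toLinearMap (by ext; simp)
  | n + 1, _, _, hM, ⟨G, f, _, _, hf, hN⟩ =>
    IsTensorExact.of_isSyzygy hd n
      ((IsTensorExact.of_flat hd G).of_shortExact (LinearMap.ker f).injective_subtype hf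
        (LinearMap.exact_subtype_ker_map f) hM) hN

end IsTensorExact

section CompleteResolution

variable {F : ℤ → ModuleCat.{0} R} (d : ∀ i : ℤ, F i →ₗ[R] F (i + 1))

noncomputable abbrev cochainComplexOf (hd : ∀ i, d (i + 1) ∘ₗ d i = 0) :
    CochainComplex (ModuleCat.{0} R) ℤ :=
  CochainComplex.of F (fun i => ModuleCat.ofHom (d i)) (fun i => by ext x; exact congr($(hd i) x))

variable {d}

lemma exactAt_cochainComplexOf (hd : ∀ i, Function.Exact (d i) (d (i + 1))) (j : ℤ) :
    (cochainComplexOf d fun i => (hd i).linearMap_comp_eq_zero).ExactAt j := by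
  obtain ⟨j, rfl⟩ : ∃ k, j = k + 1 := ⟨j - 1, by ring⟩
  rw [CochainComplex.exactAt_succ_iff_function_exact]
  simpa using hd j

lemma IsTensorExact.exactAt_mapHomologicalComplex (hd : ∀ i, d (i + 1) ∘ₗ d i = 0) {M : Type}
    [AddCommGroup M] [Module R M] (hM : IsTensorExact d M) (j : ℤ) :
    ((((tensoringLeft _).obj (ModuleCat.of R M)).mapHomologicalComplex _).obj
      (cochainComplexOf d hd)).ExactAt j := by
  obtain ⟨j, rfl⟩ : ∃ k, j = k + 1 := ⟨j - 1, by ring⟩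
  rw [CochainComplex.exactAt_succ_iff_function_exact]
  simp only [Functor.mapHomologicalComplex_obj_d, CochainComplex.of_d]
  exact hM j

lemma subsingleton_tor_of_isTensorExact [∀ i, Module.Free R (F i)]
    (hd : ∀ i, Function.Exact (d i) (d (i + 1))) {X : Type} [AddCommGroup X] [Module R X] {i₀ : ℤ}
    (eX : X ≃ₗ[R] F (i₀ + 1) ⧸ LinearMap.range (d i₀)) {M : Type} [AddCommGroup M] [Module R M]
    (hM : IsTensorExact d M) {n : ℕ} (hn : 0 < n) :
    Subsingleton (((Tor (ModuleCat R) n).obj (ModuleCat.of R M)).obj (ModuleCat.of R X)) := by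
  have hd₀ i : d (i + 1) ∘ₗ d i = 0 := (hd i).linearMap_comp_eq_zero
  let K := cochainComplexOf d hd₀
  have : ∀ i, Projective (K.X i) := fun i => inferInstanceAs (Projective (F i))
  let P := ProjectiveResolution.ofCochainComplex K (exactAt_cochainComplexOf hd) i₀ (i₀ + 1) rfl
  let eCoker : ModuleCat.of R X ≅ cokernel (K.d i₀ (i₀ + 1)) :=
    eX.toModuleIso ≪≫ (ModuleCat.cokernelIsoRangeQuotient (ModuleCat.ofHom (d i₀))).symm ≪≫
      cokernelIsoOfEq (by simp [K])
  obtain ⟨m, rfl⟩ : ∃ m, n = m + 1 := ⟨n - 1, by omega⟩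
  have hP : ((((tensoringLeft _).obj (ModuleCat.of R M)).mapHomologicalComplex _).obj
      P.complex).ExactAt (m + 1) :=
    (HomologicalComplex.exactAt_restriction_embeddingUpIntLE_iff _ _ m).mpr
      (hM.exactAt_mapHomologicalComplex hd₀ _)
  exact ModuleCat.subsingleton_of_isZero
    (hP.isZero_homology.of_iso ((((Tor _ _).obj _).mapIso eCoker) ≪≫ P.isoLeftDerivedObj _ _))

end CompleteResolution

theorem gRegular_of_test_module_summand_of_syzygy_general
    (R : Type) [CommRing R]
    (E : Type) [AddCommGroup E] [Module R E] [Module.Injective R E]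
    (T : Type) [AddCommGroup T] [Module R T]
    (htest : ∀ (N : Type) [AddCommGroup N] [Module R N], Module.Finite R N →
      (∀ i : ℕ, 0 < i →
        Subsingleton ((((Tor (ModuleCat R) i).obj (ModuleCat.of R T)).obj
          (ModuleCat.of R N)))) →
      Module.Free R N)
    (hsyz : ∃ (n : ℕ) (Z C : ModuleCat R), IsSyzygy R n (ModuleCat.of R E) Z ∧
      Nonempty ((T × (C : Type)) ≃ₗ[R] Z)) :
    ∀ (X : Type) [AddCommGroup X] [Module R X], Module.Finite R X →
      IsTotallyReflexive R X → Module.Free R X := by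
  intro X _ _ hX ⟨F, d, _, _, hd, hdual, i₀, ⟨eX⟩⟩
  obtain ⟨n, Z, C, hZ, ⟨eT⟩⟩ := hsyz
  replace hd i : Function.Exact (d i) (d (i + 1)) := LinearMap.exact_iff.mpr (hd i).symm
  have hE : IsTensorExact d E :=
    .of_injective (fun i => LinearMap.exact_iff.mpr (hdual i).symm) E
  have hT : IsTensorExact d T :=
    (hE.of_isSyzygy hd n hZ).of_retract (eT.toLinearMap ∘ₗ .inl R T C)
      (.fst R T C ∘ₗ eT.symm.toLinearMap) (by ext; simp)
  exact htest X hX fun i hi => subsingleton_tor_of_isTensorExact hd eX hT hi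

/-- Observation 2.13: over an Artinian local ring with canonical module `ω_R`
(the injective envelope `E` of the residue field), if `T` is a proj-test module that is a
direct summand of a syzygy of `ω_R`, then every totally reflexive module is free
(`R` is G-regular). -/
theorem gRegular_of_test_module_summand_of_syzygy
    (R : Type) [CommRing R] [IsArtinianRing R] [IsLocalRing R]
    (E : Type) [AddCommGroup E] [Module R E] [Module.Injective R E]
    (ι : (R ⧸ IsLocalRing.maximalIdeal R) →ₗ[R] E) (hι : Function.Injective ι)
    (hess : ∀ N : Submodule R E, N ≠ ⊥ → N ⊓ LinearMap.range ι ≠ ⊥)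
    (T : Type) [AddCommGroup T] [Module R T] [Module.Finite R T]
    (htest : ∀ (N : Type) [AddCommGroup N] [Module R N], Module.Finite R N →
      (∀ i : ℕ, 0 < i →
        Subsingleton ((((Tor (ModuleCat R) i).obj (ModuleCat.of R T)).obj
          (ModuleCat.of R N)))) →
      Module.Free R N)
    (hsyz : ∃ (n : ℕ) (Z C : ModuleCat R), IsSyzygy R n (ModuleCat.of R E) Z ∧
      Nonempty ((T × (C : Type)) ≃ₗ[R] Z)) :
    ∀ (X : Type) [AddCommGroup X] [Module R X], Module.Finite R X →
      IsTotallyReflexive R X → Module.Free R X :=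
  gRegular_of_test_module_summand_of_syzygy_general R E T htest hsyz
end

section
/- Let P' be a standard-graded polynomial ring over a field k with maximal homogeneous ideal M', and let B' be an M'-primary homogeneous ideal of P'. Suppose the top degree of P'/B' (the largest d with [P'/B']_d ≠ 0) is strictly less than the maximal degree of a minimal homogeneous generator of B'. Then (B' :_{P'} M') ≠ (M'·B' :_{P'} M'). -/
/-!
Write a homogeneous `f` of degree `e > d` as a sum of terms `xᵢ g` with `g` homogeneous of
degree `e - 1 ≥ d`. If `deg g > d` then `g ∈ B'`, so `xᵢ g ∈ M'B'`. If `deg g = d` then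
`g M' ⊆ B'`, since `B'` contains every form of degree `> d`; so `g ∈ (B' : M') = (M'B' : M')`
and again `xᵢ g ∈ M'B'`. Thus `f ∈ M'B'`, so `B'` has no minimal generator of degree `> d`.
-/

open MvPolynomial Ideal

namespace MvPolynomial

variable {σ R : Type*} [CommSemiring R]

theorem IsHomogeneous.mem_of_forall_X_mul_mem {J : Ideal (MvPolynomial σ R)}
    {φ : MvPolynomial σ R} {e : ℕ} (hφ : φ.IsHomogeneous (e + 1))
    (hJ : ∀ (i : σ) (g : MvPolynomial σ R), g.IsHomogeneous e → X i * g ∈ J) : φ ∈ J := by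
  rw [φ.as_sum]
  refine J.sum_mem fun m hm => ?_
  have hdeg : m.degree = e + 1 := by
    rw [Finsupp.degree_eq_weight_one]
    exact hφ (mem_support_iff.mp hm)
  obtain ⟨i, hi⟩ : ∃ i, m i ≠ 0 := by
    by_contra! h
    simp [show m = 0 from Finsupp.ext h] at hdeg
  obtain ⟨m, rfl⟩ : ∃ m', m = m' + Finsupp.single i 1 :=
    ⟨m - Finsupp.single i 1,
      (tsub_add_cancel_of_le (Finsupp.single_le_iff.2 (Nat.one_le_iff_ne_zero.2 hi))).symm⟩
  rw [monomial_add_single, pow_one, mul_comm]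
  exact hJ i _ (isHomogeneous_monomial _ (by simpa using hdeg))

theorem mem_colon_span_range_X_iff {I : Ideal (MvPolynomial σ R)} {r : MvPolynomial σ R} :
    r ∈ I.colon (span (Set.range X) : Ideal (MvPolynomial σ R)) ↔ ∀ i, r * X i ∈ I := by
  simp [Submodule.colon_span, Submodule.mem_colon]

theorem IsHomogeneous.mem_span_X_mul_of_colon_eq {I : Ideal (MvPolynomial σ R)} {d e : ℕ}
    (hI : ∀ (e : ℕ) (f : MvPolynomial σ R), d < e → f.IsHomogeneous e → f ∈ I)
    (hcolon : I.colon (span (Set.range X) : Ideal (MvPolynomial σ R)) =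
      (span (Set.range X) * I).colon (span (Set.range X) : Ideal (MvPolynomial σ R)))
    {f : MvPolynomial σ R} (hf : f.IsHomogeneous e) (hde : d < e) :
    f ∈ span (Set.range X) * I := by
  obtain ⟨e, rfl⟩ : ∃ e', e = e' + 1 := ⟨e - 1, by omega⟩
  refine hf.mem_of_forall_X_mul_mem fun i g hg => ?_
  have hX : X i ∈ (span (Set.range X) : Ideal (MvPolynomial σ R)) := subset_span ⟨i, rfl⟩
  rcases (Nat.lt_succ_iff.1 hde).eq_or_lt with rfl | hlt
  · have hg_colon : g ∈ I.colon (span (Set.range X) : Ideal (MvPolynomial σ R)) :=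
      mem_colon_span_range_X_iff.2 fun j => hI _ _ (by omega) (hg.mul (isHomogeneous_X R j))
    rw [hcolon, mem_colon_span_range_X_iff] at hg_colon
    exact mul_comm g (X i) ▸ hg_colon i
  · exact mul_mem_mul hX (hI _ _ hlt hg)

end MvPolynomial

theorem colon_ne_colon_of_topDegree_lt_maxGenDegree_general
    (k : Type*) [Field k] (n : ℕ) (B' : Ideal (MvPolynomial (Fin n) k))
    (M' : Ideal (MvPolynomial (Fin n) k)) (hM' : M' = Ideal.span (Set.range X))
    -- `d` is the top degree of `P'/B'`:
    (d : ℕ)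
    (htop' : ∀ (e : ℕ) (f : MvPolynomial (Fin n) k), d < e → f.IsHomogeneous e → f ∈ B')
    -- `B'` has a minimal generator of degree `> d`:
    (hgen : ∃ (e : ℕ) (f : MvPolynomial (Fin n) k),
      d < e ∧ f.IsHomogeneous e ∧ f ∈ B' ∧ f ∉ M' * B') :
    Submodule.colon (B' : Submodule (MvPolynomial (Fin n) k) (MvPolynomial (Fin n) k)) M' ≠
      Submodule.colon ((M' * B' : Ideal (MvPolynomial (Fin n) k)) :
        Submodule (MvPolynomial (Fin n) k) (MvPolynomial (Fin n) k)) M' := by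
  subst hM'
  obtain ⟨e, f, hde, hf, -, hfMB⟩ := hgen
  exact fun hcolon => hfMB (IsHomogeneous.mem_span_X_mul_of_colon_eq htop' hcolon hf hde)

/-- Lemma 3.8: Let `B'` be an `M'`-primary homogeneous ideal of a standard-graded
polynomial ring `P' = k[x₁,…,xₙ]` with irrelevant maximal ideal `M'`.  If the top degree `d`
of `P'/B'` is strictly smaller than the maximal generator degree of `B'` (i.e. `B'` has a
minimal generator of degree `> d`), then `(B' : M') ≠ (M'B' : M')`. -/
theorem colon_ne_colon_of_topDegree_lt_maxGenDegree
    (k : Type*) [Field k] (n : ℕ) (B' : Ideal (MvPolynomial (Fin n) k))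
    (M' : Ideal (MvPolynomial (Fin n) k)) (hM' : M' = Ideal.span (Set.range X))
    -- `B'` is homogeneous:
    (hhom : ∀ f ∈ B', ∀ e : ℕ, (homogeneousComponent e f) ∈ B')
    -- `B'` is `M'`-primary:
    (hBM : B' ≤ M') (hprim : ∃ m : ℕ, M' ^ m ≤ B')
    -- `d` is the top degree of `P'/B'`:
    (d : ℕ) (htop : ∃ f : MvPolynomial (Fin n) k, f.IsHomogeneous d ∧ f ∉ B')
    (htop' : ∀ (e : ℕ) (f : MvPolynomial (Fin n) k), d < e → f.IsHomogeneous e → f ∈ B')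
    -- `B'` has a minimal generator of degree `> d`:
    (hgen : ∃ (e : ℕ) (f : MvPolynomial (Fin n) k),
      d < e ∧ f.IsHomogeneous e ∧ f ∈ B' ∧ f ∉ M' * B') :
    Submodule.colon (B' : Submodule (MvPolynomial (Fin n) k) (MvPolynomial (Fin n) k)) M' ≠
      Submodule.colon ((M' * B' : Ideal (MvPolynomial (Fin n) k)) :
        Submodule (MvPolynomial (Fin n) k) (MvPolynomial (Fin n) k)) M' :=
  colon_ne_colon_of_topDegree_lt_maxGenDegree_general k n B' M' hM' d htop' hgen
end

section
/- Let P be a commutative Noetherian ring, A ⊆ B ideals with A ⊆ B², Δ ∈ P with (A :_P Δ) = B, and suppose B is generated by a regular sequence. Let b₂ : B₂ → B₁ be the second Koszul differential on the chosen regular generating sequence of B, and L : B₁ → B₂ a P-module homomorphism with b₂ ∘ L ≡ Δ·id_{B₁} mod A·B₁ and B·I₁(L) ⊆ (A, Δ). Then {β₁ ∈ B₁ | L(β₁) ∈ (A, Δ)·B₂} = B·B₁. -/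
/-!
Write `J = (A, Δ)`. If `β ∈ B·B₁` then `L β` is a combination of the `b · L(eᵢ)` with `b ∈ B`,
and each of these lies in `J·B₂` because `B·I₁(L) ⊆ J`. Conversely, if `L β = α + Δ γ` with
`α ∈ A·B₂`, applying `b₂` and `b₂ ∘ L ≡ Δ mod A·B₁` gives `Δ (β − b₂ γ) ∈ A·B₁`, so
`β − b₂ γ ∈ (A :_P Δ)·B₁ = B·B₁`; and `b₂ γ ∈ B·B₁` since `b₂` has entries in `(θ)`.
-/

/-- The second Koszul differential `b₂ : Λ²(Pⁿ) → Pⁿ` on a sequence `θ`, with `Λ²(Pⁿ)`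
realized as functions on the set of pairs `i < j`; the basis vector `e_{ij}` is sent to
`θ_j e_i − θ_i e_j`. -/
noncomputable def koszulD2 {P : Type*} [CommRing P] {n : ℕ} (θ : Fin n → P) :
    ({p : Fin n × Fin n // p.1 < p.2} → P) →ₗ[P] (Fin n → P) :=
  ∑ p : {p : Fin n × Fin n // p.1 < p.2},
    (θ p.1.2 • LinearMap.single P (fun _ : Fin n => P) p.1.1 -
      θ p.1.1 • LinearMap.single P (fun _ : Fin n => P) p.1.2) ∘ₗ
      LinearMap.proj p

open Submodule

section SmulTopPi

variable {R ι : Type*} [CommRing R] [Finite ι]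

theorem Ideal.mem_smul_top_pi_iff (I : Ideal R) (x : ι → R) :
    x ∈ I • (⊤ : Submodule R (ι → R)) ↔ ∀ i, x i ∈ I := by
  classical
  have := Fintype.ofFinite ι
  refine ⟨fun hx i => ?_, fun hx => ?_⟩
  · refine smul_induction_on hx (fun r hr m _ => ?_) (fun _ _ => I.add_mem)
    simpa using I.mul_mem_right (m i) hr
  · rw [pi_eq_sum_univ' x]
    exact Submodule.sum_mem _ fun i _ => smul_mem_smul (hx i) mem_top

theorem Ideal.smul_mem_smul_top_pi_iff (I : Ideal R) (r : R) (x : ι → R) :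
    r • x ∈ I • (⊤ : Submodule R (ι → R)) ↔
      x ∈ (I : Submodule R R).colon (Ideal.span {r}) • (⊤ : Submodule R (ι → R)) := by
  simp only [Ideal.mem_smul_top_pi_iff, Pi.smul_apply, smul_eq_mul,
    Ideal.mem_colon_span_singleton, mul_comm r]

theorem LinearMap.mem_of_mem_smul_top_pi [DecidableEq ι] {M : Type*} [AddCommGroup M]
    [Module R M] (f : (ι → R) →ₗ[R] M) {I : Ideal R} {N : Submodule R M}
    (hf : ∀ b ∈ I, ∀ i, b • f (Pi.single i 1) ∈ N) {x : ι → R}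
    (hx : x ∈ I • (⊤ : Submodule R (ι → R))) : f x ∈ N := by
  have := Fintype.ofFinite ι
  refine smul_induction_on hx (fun b hb m _ => ?_) fun _ _ ha hb => by
    rw [map_add]; exact N.add_mem ha hb
  rw [pi_eq_sum_univ' m, map_smul, map_sum, Finset.smul_sum]
  exact Submodule.sum_mem _ fun i _ => by rw [map_smul, smul_comm]; exact N.smul_mem _ (hf b hb i)

end SmulTopPi

theorem koszulD2_mem_span_range_smul_top {P : Type*} [CommRing P] {n : ℕ} (θ : Fin n → P)
    (c : {p : Fin n × Fin n // p.1 < p.2} → P) :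
    koszulD2 θ c ∈ Ideal.span (Set.range θ) • (⊤ : Submodule P (Fin n → P)) := by
  have hθ (k : Fin n) : θ k ∈ Ideal.span (Set.range θ) := Ideal.subset_span ⟨k, rfl⟩
  simp only [koszulD2, LinearMap.sum_apply, LinearMap.comp_apply,
    LinearMap.sub_apply, LinearMap.smul_apply]
  exact Submodule.sum_mem _ fun p _ =>
    sub_mem (smul_mem_smul (hθ _) mem_top) (smul_mem_smul (hθ _) mem_top)

theorem mem_smul_top_of_apply_mem_sup_span_smul_top {R ι M : Type*} [CommRing R] [Finite ι]
    [AddCommGroup M] [Module R M] {A B : Ideal R} {Δ : R}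
    (hΔ : (A : Submodule R R).colon (Ideal.span {Δ}) = B)
    (d : M →ₗ[R] ι → R) (hd : ∀ c, d c ∈ B • (⊤ : Submodule R (ι → R)))
    (L : (ι → R) →ₗ[R] M) (hL : ∀ β, d (L β) - Δ • β ∈ A • (⊤ : Submodule R (ι → R)))
    {β : ι → R} (hβ : L β ∈ (A ⊔ Ideal.span {Δ}) • (⊤ : Submodule R M)) :
    β ∈ B • (⊤ : Submodule R (ι → R)) := by
  rw [sup_smul, ideal_span_singleton_smul] at hβ
  obtain ⟨α, hα, _, ⟨γ, -, rfl⟩, hLβ⟩ := mem_sup.1 hβ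
  have hdα : d α ∈ A • (⊤ : Submodule R (ι → R)) := smul_top_le_comap_smul_top A d hα
  have hΔβ : Δ • (β - d γ) ∈ A • (⊤ : Submodule R (ι → R)) := by
    have : Δ • (β - d γ) = d α - (d (L β) - Δ • β) := by
      rw [← hLβ, map_add, DistribSMul.toLinearMap_apply, map_smul]
      module
    rw [this]
    exact sub_mem hdα (hL β)
  rw [Ideal.smul_mem_smul_top_pi_iff, hΔ] at hΔβ
  simpa using add_mem hΔβ (hd γ)

theorem ker_L_eq_B_smul_top_general
    (P : Type*) [CommRing P]
    (n : ℕ) (θ : Fin n → P)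
    (B : Ideal P) (hB : B = Ideal.span (Set.range θ))
    (A : Ideal P)
    (Δ : P) (hΔ : Submodule.colon (A : Submodule P P) (Ideal.span {Δ}) = B)
    (L : (Fin n → P) →ₗ[P] ({p : Fin n × Fin n // p.1 < p.2} → P))
    -- `b₂ ∘ L ≡ Δ · id mod A·B₁`:
    (hL1 : ∀ β : Fin n → P,
      koszulD2 θ (L β) - Δ • β ∈ (A • (⊤ : Submodule P (Fin n → P))))
    -- `B · I₁(L) ⊆ (A, Δ)`:
    (hL2 : ∀ b ∈ B, ∀ (i : Fin n) (p : {p : Fin n × Fin n // p.1 < p.2}),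
      b * (L (Pi.single i 1) p) ∈ A ⊔ Ideal.span {Δ}) :
    ∀ β : Fin n → P,
      (L β ∈ ((A ⊔ Ideal.span {Δ}) •
          (⊤ : Submodule P ({p : Fin n × Fin n // p.1 < p.2} → P)))) ↔
        β ∈ (B • (⊤ : Submodule P (Fin n → P))) := by
  intro β
  refine ⟨mem_smul_top_of_apply_mem_sup_span_smul_top hΔ (koszulD2 θ)
    (fun c => hB ▸ koszulD2_mem_span_range_smul_top θ c) L hL1, fun hβ => ?_⟩
  refine L.mem_of_mem_smul_top_pi (fun b hb i => ?_) hβ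
  exact (Ideal.mem_smul_top_pi_iff _ _).2 fun p => by simpa using hL2 b hb i p

/-- Proposition 5.6(c)/(82.1): with `B` generated by a regular sequence `θ`, `A ⊆ B²`,
`(A : Δ) = B`, and `L : B₁ → B₂` satisfying `b₂ ∘ L ≡ Δ·id mod A·B₁` and
`B·I₁(L) ⊆ (A, Δ)`, one has `{β₁ ∈ B₁ | L(β₁) ∈ (A, Δ)·B₂} = B·B₁`. -/
theorem ker_L_eq_B_smul_top
    (P : Type*) [CommRing P] [IsNoetherianRing P]
    (n : ℕ) (θ : Fin n → P)
    (hreg : RingTheory.Sequence.IsRegular P (List.ofFn θ))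
    (B : Ideal P) (hB : B = Ideal.span (Set.range θ))
    (A : Ideal P) (hA : A ≤ B ^ 2)
    (Δ : P) (hΔ : Submodule.colon (A : Submodule P P) (Ideal.span {Δ}) = B)
    (L : (Fin n → P) →ₗ[P] ({p : Fin n × Fin n // p.1 < p.2} → P))
    -- `b₂ ∘ L ≡ Δ · id mod A·B₁`:
    (hL1 : ∀ β : Fin n → P,
      koszulD2 θ (L β) - Δ • β ∈ (A • (⊤ : Submodule P (Fin n → P))))
    -- `B · I₁(L) ⊆ (A, Δ)`:
    (hL2 : ∀ b ∈ B, ∀ (i : Fin n) (p : {p : Fin n × Fin n // p.1 < p.2}),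
      b * (L (Pi.single i 1) p) ∈ A ⊔ Ideal.span {Δ}) :
    ∀ β : Fin n → P,
      (L β ∈ ((A ⊔ Ideal.span {Δ}) •
          (⊤ : Submodule P ({p : Fin n × Fin n // p.1 < p.2} → P)))) ↔
        β ∈ (B • (⊤ : Submodule P (Fin n → P))) :=
  ker_L_eq_B_smul_top_general P n θ B hB A Δ hΔ L hL1 hL2
end
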